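/- arXiv:1905.13411 — 4 statements merged into one kernel-verified Lean document; each statement's English description precedes it below -/
import Mathlib

section
/- Let χ be a predicate on assignments to X, let D be a set of variables with X ⊆ D such that every existential variable in D has a unique Skolem function for domain χ in φ|_D, and let v ∉ D be an existential variable that has a unique Skolem function relative to D for domain χ in φ. Then v has a unique Skolem function for domain χ in φ|_{D∪{v}}. -/
/-! Basic framework: variables are `X ⊕ Y` where `X` are the universal and
`Y` the existential variables (this makes `X` and `Y` disjoint by construction). -/

/-- A literal: a variable together with a polarity. -/
abbrev Lit (X Y : Type) := (X ⊕ Y) × Bool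

/-- A clause is a finite set of literals. -/
abbrev Clause (X Y : Type) := Finset (Lit X Y)

/-- A (total) assignment to all variables. Assignments "to a set `D` of variables"
are modelled as total assignments; all notions below only inspect the relevant variables. -/
abbrev Assn (X Y : Type) := (X ⊕ Y) → Bool

/-- An assignment satisfies a literal if it maps its variable to its polarity. -/
def satLit {X Y : Type} (σ : Assn X Y) (l : Lit X Y) : Prop := σ l.1 = l.2

/-- An assignment satisfies a clause if it satisfies at least one of its literals. -/
def satClause {X Y : Type} (σ : Assn X Y) (c : Clause X Y) : Prop := ∃ l ∈ c, satLit σ l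

/-- An assignment satisfies a clause set if it satisfies every clause in it. -/
def satCnf {X Y : Type} (σ : Assn X Y) (ψ : Set (Clause X Y)) : Prop := ∀ c ∈ ψ, satClause σ c

/-- The combined assignment `(xa, ya)`. -/
def combine {X Y : Type} (xa : X → Bool) (ya : Y → Bool) : Assn X Y := Sum.elim xa ya

/-- The restriction of an assignment to the universal variables `X`. -/
def restrX {X Y : Type} (σ : Assn X Y) : X → Bool := fun x => σ (Sum.inl x)

/-- Truth of the 2QBF `∀X.∃Y.φ`: there is a Skolem function `f` such that for every
assignment `xa` to `X` the combined assignment `(xa, f(xa))` satisfies `φ`. -/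
def qbfTrue {X Y : Type} (φ : Set (Clause X Y)) : Prop :=
  ∃ f : (X → Bool) → (Y → Bool), ∀ xa : X → Bool, satCnf (combine xa (f xa)) φ

/-- `v` has a unique Skolem function for domain `χ` in `ψ`: for every assignment `xa` to `X`
satisfying `χ` there is exactly one Boolean `b` such that some assignment `ya` to the
existential variables with `ya v = b` makes `(xa, ya)` satisfy `ψ`. -/
def uniqueSkolem {X Y : Type} (ψ : Set (Clause X Y)) (χ : (X → Bool) → Prop) (v : Y) : Prop :=
  ∀ xa : X → Bool, χ xa →
    ∃! b : Bool, ∃ ya : Y → Bool, ya v = b ∧ satCnf (combine xa ya) ψ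

/-- `C|_D`: the clauses of `C` all of whose variables lie in `D`. -/
def restrictC {X Y : Type} (C : Set (Clause X Y)) (D : Set (X ⊕ Y)) : Set (Clause X Y) :=
  {c ∈ C | ∀ l ∈ c, l.1 ∈ D}

/-- Clause `c` has unique consequence `v` relative to `D`: it contains a literal of `v`
and all its other literals are of variables in `D`. -/
def hasUC {X Y : Type} (c : Clause X Y) (v : Y) (D : Set (X ⊕ Y)) : Prop :=
  (∃ b : Bool, (Sum.inr v, b) ∈ c) ∧ ∀ l ∈ c, l.1 ≠ Sum.inr v → l.1 ∈ D

/-- `U_v`: the clauses of `C` with unique consequence `v` relative to `D`. -/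
def UC {X Y : Type} (C : Set (Clause X Y)) (v : Y) (D : Set (X ⊕ Y)) : Set (Clause X Y) :=
  {c ∈ C | hasUC c v D}

/-- `A_(v,b)`: some clause `c` in `U_v` contains the literal `(v, b)` and the assignment
falsifies every literal of `c` other than the literals of `v`. -/
def Ant {X Y : Type} (C : Set (Clause X Y)) (v : Y) (D : Set (X ⊕ Y)) (b : Bool)
    (σ : Assn X Y) : Prop :=
  ∃ c ∈ UC C v D, (Sum.inr v, b) ∈ c ∧ ∀ l ∈ c, l.1 ≠ Sum.inr v → ¬ satLit σ l

/-- `deterministic(v, C, χ, D)`. -/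
def deterministic {X Y : Type} (v : Y) (C : Set (Clause X Y)) (χ : (X → Bool) → Prop)
    (D : Set (X ⊕ Y)) : Prop :=
  ∀ σ : Assn X Y, satCnf σ (restrictC C D) → χ (restrX σ) →
    Ant C v D true σ ∨ Ant C v D false σ

/-- `unconflicted(v, C, χ, D)`. -/
def unconflicted {X Y : Type} (v : Y) (C : Set (Clause X Y)) (χ : (X → Bool) → Prop)
    (D : Set (X ⊕ Y)) : Prop :=
  ∀ σ : Assn X Y, satCnf σ (restrictC C D) → χ (restrX σ) →
    ¬ (Ant C v D true σ ∧ Ant C v D false σ)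

/-- `v` has a unique Skolem function relative to `D` for domain `χ` in `C`: for every
assignment to `D` satisfying `C|_D` whose restriction to `X` satisfies `χ`, there is exactly
one Boolean `b` such that extending the assignment by `v ↦ b` satisfies every clause of `U_v`. -/
def uniqueSkolemRel {X Y : Type} [DecidableEq X] [DecidableEq Y] (v : Y)
    (C : Set (Clause X Y)) (χ : (X → Bool) → Prop) (D : Set (X ⊕ Y)) : Prop :=
  ∀ σ : Assn X Y, satCnf σ (restrictC C D) → χ (restrX σ) →
    ∃! b : Bool, satCnf (Function.update σ (Sum.inr v) b) (UC C v D)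

private lemma satClause_congr {X Y : Type} {σ1 σ2 : Assn X Y} {c : Clause X Y}
    (h : ∀ l ∈ c, σ1 l.1 = σ2 l.1) : satClause σ1 c → satClause σ2 c := by
  rintro ⟨l, hl, hs⟩
  exact ⟨l, hl, by rw [satLit, ← h l hl]; exact hs⟩

private lemma combine_restr {X Y : Type} (σ : Assn X Y) :
    combine (restrX σ) (fun y => σ (Sum.inr y)) = σ := by
  funext w; cases w <;> rfl

private lemma restrict_mono {X Y : Type} (C : Set (Clause X Y)) {D E : Set (X ⊕ Y)}
    (h : D ⊆ E) : restrictC C D ⊆ restrictC C E := by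
  rintro c ⟨hc, hl⟩; exact ⟨hc, fun l hlc => h (hl l hlc)⟩

private lemma UC_sub {X Y : Type} (C : Set (Clause X Y)) (v : Y) (D : Set (X ⊕ Y)) :
    UC C v D ⊆ restrictC C (insert (Sum.inr v) D) := by
  rintro c ⟨hc, hvc, hDl⟩
  refine ⟨hc, fun l hl => ?_⟩
  by_cases h : l.1 = Sum.inr v
  · exact h ▸ Set.mem_insert _ _
  · exact Set.mem_insert_of_mem _ (hDl l hl h)

private lemma eq_at_v {X Y : Type} [DecidableEq X] [DecidableEq Y]
    (φ : Set (Clause X Y)) (χ : (X → Bool) → Prop) (D : Set (X ⊕ Y))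
    (hD : ∀ y : Y, Sum.inr y ∈ D → uniqueSkolem (restrictC φ D) χ y)
    (v : Y) (hrel : uniqueSkolemRel v φ χ D)
    (σ1 σ2 : Assn X Y) (hx : restrX σ1 = restrX σ2) (hχ : χ (restrX σ1))
    (h1 : satCnf σ1 (restrictC φ (insert (Sum.inr v) D)))
    (h2 : satCnf σ2 (restrictC φ (insert (Sum.inr v) D))) :
    σ1 (Sum.inr v) = σ2 (Sum.inr v) := by
  have hsub : restrictC φ D ⊆ restrictC φ (insert (Sum.inr v) D) :=
    restrict_mono φ (Set.subset_insert _ _)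
  have h1D : satCnf σ1 (restrictC φ D) := fun c hc => h1 c (hsub hc)
  have h2D : satCnf σ2 (restrictC φ D) := fun c hc => h2 c (hsub hc)
  have hagree : ∀ d ∈ D, σ1 d = σ2 d := by
    rintro (x | y) hd
    · exact congrFun hx x
    · obtain ⟨b, hb, hb'⟩ := hD y hd (restrX σ1) hχ
      have e1 : σ1 (Sum.inr y) = b := hb' _ ⟨fun y' => σ1 (Sum.inr y'), rfl, by
        rw [combine_restr]; exact h1D⟩
      have e2 : σ2 (Sum.inr y) = b := hb' _ ⟨fun y' => σ2 (Sum.inr y'), rfl, by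
        rw [hx, combine_restr]; exact h2D⟩
      rw [e1, e2]
  obtain ⟨b, hb, hb'⟩ := hrel σ1 h1D hχ
  have sUC : ∀ (σ : Assn X Y), satCnf σ (restrictC φ (insert (Sum.inr v) D)) →
      satCnf σ (UC φ v D) := fun σ hσ c hc => hσ c (UC_sub φ v D hc)
  have e1 : σ1 (Sum.inr v) = b := by
    apply hb'
    rw [Function.update_eq_self]
    exact sUC σ1 h1
  have e2 : σ2 (Sum.inr v) = b := by
    apply hb'
    intro c hc
    have hDl := hc.2.2
    refine satClause_congr (σ1 := σ2) ?_ (sUC σ2 h2 c hc)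
    intro l hl
    by_cases h : l.1 = Sum.inr v
    · rw [h, Function.update_self]
    · rw [Function.update_of_ne h]
      exact (hagree l.1 (hDl l hl h)).symm
  rw [e1, e2]

/-- If every existential variable in `D` has a unique Skolem function for domain `χ` in `φ|_D`
and `v ∉ D` has a unique Skolem function relative to `D` for domain `χ` in `φ`, then `v` has a
unique Skolem function for domain `χ` in `φ|_{D ∪ {v}}`. -/
theorem stmt_1 {X Y : Type} [Fintype X] [Fintype Y] [DecidableEq X] [DecidableEq Y]
    (φ : Set (Clause X Y)) (hφfin : φ.Finite)
    (hφY : ∀ c ∈ φ, ∃ l ∈ c, ∃ y : Y, l.1 = Sum.inr y)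
    (χ : (X → Bool) → Prop) (D : Set (X ⊕ Y))
    (hXD : ∀ x : X, Sum.inl x ∈ D)
    (hD : ∀ y : Y, Sum.inr y ∈ D → uniqueSkolem (restrictC φ D) χ y)
    (v : Y) (hv : Sum.inr v ∉ D)
    (hrel : uniqueSkolemRel v φ χ D) :
    uniqueSkolem (restrictC φ (insert (Sum.inr v) D)) χ v := by
  intro xa hχ
  obtain ⟨ya0, hya0⟩ : ∃ ya0 : Y → Bool, satCnf (combine xa ya0) (restrictC φ D) := by
    by_cases hY : ∃ y : Y, Sum.inr y ∈ D
    · obtain ⟨y, hy⟩ := hY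
      obtain ⟨b, ⟨ya, _, hsat⟩, _⟩ := hD y hy xa hχ
      exact ⟨ya, hsat⟩
    · refine ⟨fun _ => true, fun c hc => ?_⟩
      obtain ⟨hcφ, hclD⟩ := hc
      obtain ⟨l, hl, y, hy⟩ := hφY c hcφ
      exact absurd (hy ▸ hclD l hl) (fun h => hY ⟨y, h⟩)
  set σ0 := combine xa ya0 with hσ0
  have hx0 : restrX σ0 = xa := rfl
  obtain ⟨b, hb, -⟩ := hrel σ0 hya0 (hx0 ▸ hχ)
  set ya : Y → Bool := fun y => if y = v then b else ya0 y with hya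
  have hcomb : combine xa ya = Function.update σ0 (Sum.inr v) b := by
    funext w
    cases w with
    | inl x =>
      rw [Function.update_of_ne (by simp)]
      rfl
    | inr y =>
      by_cases h : y = v
      · subst h
        rw [Function.update_self]
        simp [combine, hya]
      · rw [Function.update_of_ne (by simpa using h)]
        simp [combine, hya, h, hσ0]
  have hsat : satCnf (combine xa ya) (restrictC φ (insert (Sum.inr v) D)) := by
    intro c hc
    obtain ⟨hcφ, hclD⟩ := hc
    by_cases hvc : ∃ l ∈ c, l.1 = Sum.inr v
    · have hcU : c ∈ UC φ v D := by
        obtain ⟨l, hl, hlv⟩ := hvc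
        refine ⟨hcφ, ⟨l.2, by rw [← hlv]; exact hl⟩, fun l' hl' hne => ?_⟩
        rcases hclD l' hl' with h | h
        · exact absurd h hne
        · exact h
      rw [hcomb]
      exact hb c hcU
    · push_neg at hvc
      have hcD : c ∈ restrictC φ D := ⟨hcφ, fun l hl => by
        rcases hclD l hl with h | h
        · exact absurd h (hvc l hl)
        · exact h⟩
      refine satClause_congr (σ1 := σ0) ?_ (hya0 c hcD)
      intro l hl
      rw [hcomb, Function.update_of_ne (hvc l hl)]
  refine ⟨b, ⟨ya, by simp [hya], hsat⟩, ?_⟩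
  rintro b' ⟨ya', hb', hsat'⟩
  have := eq_at_v φ χ D hD v hrel (combine xa ya') (combine xa ya) rfl hχ hsat' hsat
  simp only [combine, Sum.elim_inr, hb', hya] at this
  simp [this]
end

section
/- Let C be a finite clause set over X ∪ Y, D a set of variables with X ⊆ D, χ a predicate on assignments to X, and v ∉ D an existential variable. If deterministic(v, C, χ, D) and unconflicted(v, C, χ, D) both hold, then v has a unique Skolem function relative to D for domain χ in C. -/
/-- If `deterministic(v, C, χ, D)` and `unconflicted(v, C, χ, D)` hold, then `v` has a unique
Skolem function relative to `D` for domain `χ` in `C`. -/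
theorem stmt_2 {X Y : Type} [Fintype X] [Fintype Y] [DecidableEq X] [DecidableEq Y]
    (C : Set (Clause X Y)) (hCfin : C.Finite)
    (D : Set (X ⊕ Y)) (hXD : ∀ x : X, Sum.inl x ∈ D)
    (χ : (X → Bool) → Prop) (v : Y) (hv : Sum.inr v ∉ D)
    (hdet : deterministic v C χ D) (hunc : unconflicted v C χ D) :
    uniqueSkolemRel v C χ D := by
  intro σ hsat hχ
  have hnboth := hunc σ hsat hχ
  obtain ⟨b, hAnt, hAnt'⟩ : ∃ b : Bool, Ant C v D b σ ∧ ¬ Ant C v D (!b) σ := by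
    rcases hdet σ hsat hχ with h | h
    · exact ⟨true, h, fun h' => hnboth ⟨h, by simpa using h'⟩⟩
    · exact ⟨false, h, fun h' => hnboth ⟨by simpa using h', h⟩⟩
  refine ⟨b, ?_, ?_⟩
  · intro c hc
    by_cases h : ∃ l ∈ c, l.1 ≠ Sum.inr v ∧ satLit (Function.update σ (Sum.inr v) b) l
    · obtain ⟨l, hl, _, hsl⟩ := h
      exact ⟨l, hl, hsl⟩
    · push_neg at h
      have hfalse : ∀ l ∈ c, l.1 ≠ Sum.inr v → ¬ satLit σ l := by
        intro l hl hne hs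
        exact h l hl hne (by simpa [satLit, Function.update_of_ne hne] using hs)
      obtain ⟨⟨b', hb'⟩, hD⟩ := hc.2
      by_cases hbe : (Sum.inr v, b) ∈ c
      · exact ⟨(Sum.inr v, b), hbe, by simp [satLit]⟩
      · have hantb' : Ant C v D b' σ := ⟨c, hc, hb', hfalse⟩
        have hne : b' ≠ b := fun e => hbe (e ▸ hb')
        have hbb : b' = !b := by cases b <;> cases b' <;> simp_all
        exact absurd hantb' (hbb ▸ hAnt')
  · intro b' hb'sat
    obtain ⟨c, hcUC, hbc, hfal⟩ := hAnt
    obtain ⟨l, hl, hsl⟩ := hb'sat c hcUC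
    by_cases hne : l.1 = Sum.inr v
    · have hl2 : l.2 = b' := by
        have := hsl
        rw [satLit, hne, Function.update_self] at this
        exact this.symm
      have hlc : (Sum.inr v, b') ∈ c := by
        have : l = (Sum.inr v, b') := Prod.ext hne hl2
        rwa [this] at hl
      by_contra hne2
      have hAntb' : Ant C v D b' σ := ⟨c, hcUC, hlc, hfal⟩
      cases b <;> cases b' <;> simp_all
    · exact absurd (by simpa [satLit, Function.update_of_ne hne] using hsl)
        (hfal l hl hne)
end

section
/- If Φ is false, then no state with status SAT is reachable from the initial state via the transition rules of basic Incremental Determinization. -/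
/-! The state of the Incremental Determinization solver. -/

/-- The solver status. -/
inductive Status (X Y : Type) where
  | ready : Status X Y
  | conflict (L : Clause X Y) (d : Assn X Y) : Status X Y
  | sat : Status X Y
  | unsat : Status X Y

/-- A solver state `(S, C, D, χ, α)`: a status, a stack of clause sets, a stack of sets of
variables, and two predicates on assignments to `X`. -/
structure IDState (X Y : Type) where
  status : Status X Y
  C : List (Set (Clause X Y))
  D : List (Set (X ⊕ Y))
  chi : (X → Bool) → Prop
  alpha : (X → Bool) → Prop

/-- The union of the elements of a stack of sets. -/
def stackUnion {β : Type} (S : List (Set β)) : Set β := {x | ∃ s ∈ S, x ∈ s}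

/-- The first element (index 0) of a stack of sets. -/
def first {β : Type} (S : List (Set β)) : Set β := S.getD 0 ∅

/-- Add an element to the last set of a stack. -/
def addLast {β : Type} : List (Set β) → β → List (Set β)
  | [], v => [{v}]
  | [s], v => [insert v s]
  | s :: t :: rest, v => s :: addLast (t :: rest) v

/-- Add an element to the first set of a stack. -/
def addFirst {β : Type} : List (Set β) → β → List (Set β)
  | [], x => [{x}]
  | s :: rest, x => insert x s :: rest

/-- The initial state `(Ready, ⟨φ⟩, ⟨X⟩, ⊤, ⊤)`. -/
def initState {X Y : Type} (φ : Set (Clause X Y)) : IDState X Y :=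
  ⟨Status.ready, [φ], [Set.range Sum.inl], fun _ => True, fun _ => True⟩

/-- The transition rules of basic Incremental Determinization. -/
inductive Step {X Y : Type} [DecidableEq X] [DecidableEq Y] :
    IDState X Y → IDState X Y → Prop

  | propagate (C : List (Set (Clause X Y))) (D : List (Set (X ⊕ Y)))
      (χ α : (X → Bool) → Prop) (v : Y)
      (hv : Sum.inr v ∉ stackUnion D)
      (hdet : deterministic v (stackUnion C) (fun xa => χ xa ∧ α xa) (stackUnion D))
      (hunc : unconflicted v (stackUnion C) (fun xa => χ xa ∧ α xa) (stackUnion D)) :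
      Step ⟨Status.ready, C, D, χ, α⟩ ⟨Status.ready, C, addLast D (Sum.inr v), χ, α⟩
  | decide (C : List (Set (Clause X Y))) (D : List (Set (X ⊕ Y)))
      (χ α : (X → Bool) → Prop) (v : Y) (δ : Set (Clause X Y))
      (hv : Sum.inr v ∉ stackUnion D) (hδfin : δ.Finite)
      (hδ : ∀ c ∈ δ, hasUC c v (stackUnion D)) :
      Step ⟨Status.ready, C, D, χ, α⟩ ⟨Status.ready, C ++ [δ], D ++ [∅], χ, α⟩
  | sat (C : List (Set (Clause X Y))) (D : List (Set (X ⊕ Y)))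
      (χ : (X → Bool) → Prop)
      (hD : stackUnion D = Set.univ) :
      Step ⟨Status.ready, C, D, χ, fun _ => True⟩ ⟨Status.sat, C, D, χ, fun _ => True⟩
  | conflict (C : List (Set (Clause X Y))) (D : List (Set (X ⊕ Y)))
      (χ α : (X → Bool) → Prop) (v : Y) (σ : Assn X Y)
      (hv : Sum.inr v ∉ stackUnion D)
      (hsat : satCnf σ (restrictC (stackUnion C) (stackUnion D)))
      (hχ : χ (restrX σ)) (hα : α (restrX σ))
      (ht : Ant (stackUnion C) v (stackUnion D) true σ)
      (hf : Ant (stackUnion C) v (stackUnion D) false σ) :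
      Step ⟨Status.ready, C, D, χ, α⟩
        ⟨Status.conflict {(Sum.inr v, true), (Sum.inr v, false)} σ, C, D, χ, α⟩
  | analyze (C : List (Set (Clause X Y))) (D : List (Set (X ⊕ Y)))
      (χ α : (X → Bool) → Prop) (L : Clause X Y) (σ : Assn X Y)
      (c : Clause X Y) (l : Lit X Y)
      (hc : c ∈ first C) (hl : l ∈ L) (hlc : (l.1, !l.2) ∈ c) :
      Step ⟨Status.conflict L σ, C, D, χ, α⟩
        ⟨Status.conflict (L.erase l ∪ c.erase (l.1, !l.2)) σ, C, D, χ, α⟩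
  | learn (C : List (Set (Clause X Y))) (D : List (Set (X ⊕ Y)))
      (χ α : (X → Bool) → Prop) (L : Clause X Y) (σ : Assn X Y)
      (h : ∃ l ∈ L, l.1 ∉ stackUnion D) :
      Step ⟨Status.conflict L σ, C, D, χ, α⟩ ⟨Status.ready, addFirst C L, D, χ, α⟩
  | unsat (C : List (Set (Clause X Y))) (D : List (Set (X ⊕ Y)))
      (χ α : (X → Bool) → Prop) (L : Clause X Y) (σ : Assn X Y)
      (hvars : ∀ l ∈ L, l.1 ∈ first D)
      (hfals : ∀ l ∈ L, ¬ satLit σ l) :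
      Step ⟨Status.conflict L σ, C, D, χ, α⟩ ⟨Status.unsat, C, D, χ, α⟩
  | backtrack (S : Status X Y) (C : List (Set (Clause X Y))) (D : List (Set (X ⊕ Y)))
      (χ α : (X → Bool) → Prop) (k : ℕ) (h0 : 0 < k) (hk : k ≤ C.length) :
      Step ⟨S, C, D, χ, α⟩ ⟨S, C.take k, D.take k, χ, α⟩

/-- Reachability from the initial state via the basic ID rules. -/
def Reachable {X Y : Type} [DecidableEq X] [DecidableEq Y] (φ : Set (Clause X Y))
    (s : IDState X Y) : Prop :=
  Relation.ReflTransGen Step (initState φ) s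

/-! A run of the solver never leaves the set of states in which every universal assignment
extends to a model of the clauses that are already decided, `C|_D`: Propagate fixes the new
variable to the value its unique antecedent forces, while Decide and Learn only add clauses
mentioning a variable outside `D`, which therefore do not belong to `C|_D`. Once `D` contains
every variable, `C|_D` contains `φ`, so these extensions form a Skolem function. -/

section Stacks

variable {β : Type}

lemma mem_stackUnion {S : List (Set β)} {x : β} : x ∈ stackUnion S ↔ ∃ s ∈ S, x ∈ s :=
  Iff.rfl

@[simp]
lemma stackUnion_nil : stackUnion ([] : List (Set β)) = ∅ := by
  ext x; simp [mem_stackUnion]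

@[simp]
lemma stackUnion_cons (s : Set β) (S : List (Set β)) :
    stackUnion (s :: S) = s ∪ stackUnion S := by
  ext x; simp [mem_stackUnion]

@[simp]
lemma stackUnion_append (S T : List (Set β)) :
    stackUnion (S ++ T) = stackUnion S ∪ stackUnion T := by
  ext x; simp [mem_stackUnion, or_and_right, exists_or]

@[simp]
lemma stackUnion_addLast :
    ∀ (S : List (Set β)) (x : β), stackUnion (addLast S x) = insert x (stackUnion S)
  | [], x => by simp [addLast]
  | [s], x => by simp [addLast]
  | s :: t :: S, x => by
      simp only [addLast, stackUnion_cons, stackUnion_addLast (t :: S), Set.union_insert]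

@[simp]
lemma stackUnion_addFirst (S : List (Set β)) (x : β) :
    stackUnion (addFirst S x) = insert x (stackUnion S) := by
  cases S <;> simp [addFirst, Set.insert_union]

lemma stackUnion_take_subset (S : List (Set β)) (k : ℕ) : stackUnion (S.take k) ⊆ stackUnion S :=
  fun _ ⟨s, hs, hx⟩ => ⟨s, List.take_subset k S hs, hx⟩

lemma first_subset_stackUnion (S : List (Set β)) : first S ⊆ stackUnion S := by
  cases S <;> simp [first]

lemma first_subset_first_append (S T : List (Set β)) : first S ⊆ first (S ++ T) := by
  cases S <;> simp [first]

lemma first_take (S : List (Set β)) {k : ℕ} (hk : 0 < k) : first (S.take k) = first S := by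
  obtain ⟨k, rfl⟩ := Nat.exists_eq_add_one_of_ne_zero hk.ne'
  cases S <;> simp [first]

lemma first_addFirst (S : List (Set β)) (x : β) : first (addFirst S x) = insert x (first S) := by
  cases S <;> simp [addFirst, first]

end Stacks

section Extensible

variable {X Y : Type}

def Extensible (C : Set (Clause X Y)) (D : Set (X ⊕ Y)) : Prop :=
  ∀ xa : X → Bool, ∃ σ : Assn X Y, restrX σ = xa ∧ satCnf σ (restrictC C D)

lemma restrictC_mono {C₁ C₂ : Set (Clause X Y)} {D₁ D₂ : Set (X ⊕ Y)}
    (hC : C₁ ⊆ C₂) (hD : D₁ ⊆ D₂) : restrictC C₁ D₁ ⊆ restrictC C₂ D₂ :=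
  fun _ ⟨hc, hvars⟩ => ⟨hC hc, fun l hl => hD (hvars l hl)⟩

lemma Extensible.mono {C₁ C₂ : Set (Clause X Y)} {D₁ D₂ : Set (X ⊕ Y)}
    (h : Extensible C₂ D₂) (hC : C₁ ⊆ C₂) (hD : D₁ ⊆ D₂) : Extensible C₁ D₁ := fun xa =>
  let ⟨σ, hσ, hsat⟩ := h xa
  ⟨σ, hσ, fun c hc => hsat c (restrictC_mono hC hD hc)⟩

lemma Extensible.union {C E : Set (Clause X Y)} {D : Set (X ⊕ Y)} (h : Extensible C D)
    (hE : ∀ c ∈ E, ∃ l ∈ c, l.1 ∉ D) : Extensible (C ∪ E) D := fun xa =>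
  let ⟨σ, hσ, hsat⟩ := h xa
  ⟨σ, hσ, fun c ⟨hc, hvars⟩ => hc.elim (fun hc => hsat c ⟨hc, hvars⟩) fun hc =>
    let ⟨l, hl, hlD⟩ := hE c hc
    absurd (hvars l hl) hlD⟩

lemma extensible_range_inl {φ : Set (Clause X Y)}
    (hφY : ∀ c ∈ φ, ∃ l ∈ c, ∃ y : Y, l.1 = Sum.inr y) : Extensible φ (Set.range Sum.inl) :=
  fun xa => ⟨combine xa fun _ => true, rfl, fun c ⟨hc, hvars⟩ => by
    obtain ⟨l, hl, y, hy⟩ := hφY c hc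
    simpa [hy] using hvars l hl⟩

lemma qbfTrue_of_extensible_univ {φ C : Set (Clause X Y)} (h : Extensible C Set.univ)
    (hφ : φ ⊆ C) : qbfTrue φ := by
  choose σ hσ hsat using h
  refine ⟨fun xa y => σ xa (Sum.inr y), fun xa => ?_⟩
  have hcombine : combine xa (fun y => σ xa (Sum.inr y)) = σ xa := by
    funext w
    cases w with
    | inl x => exact (congrFun (hσ xa) x).symm
    | inr y => rfl
  rw [hcombine]
  exact fun c hc => hsat xa c ⟨hφ hc, fun _ _ => trivial⟩

variable [DecidableEq X] [DecidableEq Y]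

lemma restrX_update_inr (σ : Assn X Y) (v : Y) (b : Bool) :
    restrX (Function.update σ (Sum.inr v) b) = restrX σ :=
  funext fun _ => Function.update_of_ne Sum.inl_ne_inr _ _

lemma satClause_update_of_satLit {σ : Assn X Y} {v : Y} {c : Clause X Y} (b : Bool)
    {l : Lit X Y} (hl : l ∈ c) (hlv : l.1 ≠ Sum.inr v) (hsat : satLit σ l) :
    satClause (Function.update σ (Sum.inr v) b) c :=
  ⟨l, hl, by rwa [satLit, Function.update_of_ne hlv]⟩

lemma satCnf_update_restrictC_insert {C : Set (Clause X Y)} {D : Set (X ⊕ Y)} {v : Y}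
    {σ : Assn X Y} (b : Bool) (hsat : satCnf σ (restrictC C D))
    (hnant : ¬ Ant C v D (!b) σ) :
    satCnf (Function.update σ (Sum.inr v) b) (restrictC C (insert (Sum.inr v) D)) := by
  rintro c ⟨hc, hvars⟩
  have hvars' : ∀ l ∈ c, l.1 ≠ Sum.inr v → l.1 ∈ D := fun l hl hlv =>
    (hvars l hl).resolve_left hlv
  by_cases hb : (Sum.inr v, b) ∈ c
  · exact ⟨_, hb, by simp [satLit]⟩
  by_cases hnb : (Sum.inr v, !b) ∈ c
  · have hUC : c ∈ UC C v D := ⟨hc, ⟨_, hnb⟩, hvars'⟩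
    obtain ⟨l, hl, hlv, hsatl⟩ : ∃ l ∈ c, l.1 ≠ Sum.inr v ∧ satLit σ l := by
      by_contra! hfalsified
      exact hnant ⟨c, hUC, hnb, hfalsified⟩
    exact satClause_update_of_satLit b hl hlv hsatl
  · have hnotv : ∀ l ∈ c, l.1 ≠ Sum.inr v := by
      rintro ⟨w, p⟩ hl rfl
      cases p <;> cases b <;> simp_all
    obtain ⟨l, hl, hsatl⟩ := hsat c ⟨hc, fun l hl => hvars' l hl (hnotv l hl)⟩
    exact satClause_update_of_satLit b hl (hnotv l hl) hsatl

lemma Extensible.insert_of_deterministic {C : Set (Clause X Y)} {D : Set (X ⊕ Y)} {v : Y}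
    {χ : (X → Bool) → Prop} (h : Extensible C D) (hχ : ∀ xa, χ xa)
    (hdet : deterministic v C χ D) (hunc : unconflicted v C χ D) :
    Extensible C (insert (Sum.inr v) D) := fun xa => by
  obtain ⟨σ, rfl, hsat⟩ := h xa
  have hχσ := hχ (restrX σ)
  obtain ⟨b, hnant⟩ : ∃ b, ¬ Ant C v D (!b) σ := by
    rcases hdet σ hsat hχσ with ht | hf
    · exact ⟨true, fun hf => hunc σ hsat hχσ ⟨ht, hf⟩⟩
    · exact ⟨false, fun ht => hunc σ hsat hχσ ⟨ht, hf⟩⟩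
  exact ⟨_, restrX_update_inr σ v b, satCnf_update_restrictC_insert b hsat hnant⟩

end Extensible

section Invariant

variable {X Y : Type}

structure SatSound (φ : Set (Clause X Y)) (s : IDState X Y) : Prop where
  subset_first : φ ⊆ first s.C
  chi_alpha : ∀ xa, s.chi xa ∧ s.alpha xa
  extensible : Extensible (stackUnion s.C) (stackUnion s.D)
  qbfTrue_of_sat : s.status = Status.sat → qbfTrue φ

lemma satSound_initState {φ : Set (Clause X Y)}
    (hφY : ∀ c ∈ φ, ∃ l ∈ c, ∃ y : Y, l.1 = Sum.inr y) : SatSound φ (initState φ) where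
  subset_first := by simp [initState, first]
  chi_alpha _ := ⟨trivial, trivial⟩
  extensible := by simpa [initState] using extensible_range_inl hφY
  qbfTrue_of_sat h := nomatch h

variable [DecidableEq X] [DecidableEq Y]

lemma SatSound.step {φ : Set (Clause X Y)} {s t : IDState X Y} (hs : SatSound φ s)
    (hst : Step s t) : SatSound φ t := by
  obtain ⟨hφ, hχα, hext, hsat⟩ := hs
  cases hst with
  | propagate C D χ α v _ hdet hunc =>
    refine ⟨hφ, hχα, ?_, nofun⟩
    simpa using hext.insert_of_deterministic hχα hdet hunc
  | decide C D χ α v δ hv _ hδ =>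
    refine ⟨hφ.trans (first_subset_first_append C _), hχα, ?_, nofun⟩
    simpa using hext.union fun c hc =>
      let ⟨⟨_, hvc⟩, _⟩ := hδ c hc
      ⟨_, hvc, hv⟩
  | sat C D χ hD =>
    refine ⟨hφ, hχα, hext, fun _ => ?_⟩
    rw [hD] at hext
    exact qbfTrue_of_extensible_univ hext (hφ.trans (first_subset_stackUnion C))
  | conflict => exact ⟨hφ, hχα, hext, nofun⟩
  | analyze => exact ⟨hφ, hχα, hext, nofun⟩
  | learn C D χ α L σ h =>
    refine ⟨by simpa [first_addFirst] using hφ.trans (Set.subset_insert _ _), hχα, ?_, nofun⟩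
    rw [stackUnion_addFirst, Set.insert_eq, Set.union_comm]
    exact hext.union (by rintro c rfl; exact h)
  | unsat => exact ⟨hφ, hχα, hext, nofun⟩
  | backtrack S C D χ α k hk _ =>
    refine ⟨by simpa [first_take C hk] using hφ, hχα, ?_, hsat⟩
    exact hext.mono (stackUnion_take_subset C k) (stackUnion_take_subset D k)

lemma satSound_of_reachable {φ : Set (Clause X Y)}
    (hφY : ∀ c ∈ φ, ∃ l ∈ c, ∃ y : Y, l.1 = Sum.inr y) {s : IDState X Y}
    (hs : Reachable φ s) : SatSound φ s := by
  induction hs with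
  | refl => exact satSound_initState hφY
  | tail _ hstep ih => exact ih.step hstep

lemma qbfTrue_of_reachable_sat {φ : Set (Clause X Y)}
    (hφY : ∀ c ∈ φ, ∃ l ∈ c, ∃ y : Y, l.1 = Sum.inr y) {s : IDState X Y}
    (hs : Reachable φ s) (hsat : s.status = Status.sat) : qbfTrue φ :=
  (satSound_of_reachable hφY hs).qbfTrue_of_sat hsat

end Invariant

theorem stmt_4_general {X Y : Type} [DecidableEq X] [DecidableEq Y]
    (φ : Set (Clause X Y))
    (hφY : ∀ c ∈ φ, ∃ l ∈ c, ∃ y : Y, l.1 = Sum.inr y)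
    (hfalse : ¬ qbfTrue φ) :
    ¬ ∃ s : IDState X Y, Reachable φ s ∧ s.status = Status.sat :=
  fun ⟨_, hs, hsat⟩ => hfalse (qbfTrue_of_reachable_sat hφY hs hsat)

/-- If Φ is false, no state with status SAT is reachable via basic ID. -/
theorem stmt_4 {X Y : Type} [Fintype X] [Fintype Y] [DecidableEq X] [DecidableEq Y]
    (φ : Set (Clause X Y)) (hφfin : φ.Finite)
    (hφY : ∀ c ∈ φ, ∃ l ∈ c, ∃ y : Y, l.1 = Sum.inr y)
    (hfalse : ¬ qbfTrue φ) :
    ¬ ∃ s : IDState X Y, Reachable φ s ∧ s.status = Status.sat :=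
  stmt_4_general φ hφY hfalse
end

section
/- Let C be a finite clause set over X ∪ Y, D a set of variables with X ⊆ D, χ a predicate on assignments to X, and v ∉ D an existential variable such that unconflicted(v, C, χ, D) holds. Then for every assignment d̄ to D that satisfies C|_D and whose restriction to X satisfies χ, the extension of d̄ to D ∪ {v} that maps v to true if d̄ satisfies A_(v,true) and to false otherwise satisfies every clause in U_v. -/
/-- If unconflicted(v, C, χ, D) holds, then for every assignment to D satisfying C|_D whose
restriction to X satisfies χ, the extension of the assignment mapping v to true exactly when
A_(v,true) holds satisfies every clause of U_v. -/
theorem stmt_18 {X Y : Type} [Fintype X] [Fintype Y] [DecidableEq X] [DecidableEq Y]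
    (C : Set (Clause X Y)) (hCfin : C.Finite)
    (D : Set (X ⊕ Y)) (hXD : ∀ x : X, Sum.inl x ∈ D)
    (χ : (X → Bool) → Prop) (v : Y) (hv : Sum.inr v ∉ D)
    (hunc : unconflicted v C χ D) :
    ∀ σ : Assn X Y, satCnf σ (restrictC C D) → χ (restrX σ) →
      ∀ b : Bool, (b = true ↔ Ant C v D true σ) →
        satCnf (Function.update σ (Sum.inr v) b) (UC C v D) := by
  intro σ hsat hχ b hb c hc
  obtain ⟨hcC, ⟨b', hb'⟩, hD⟩ := hc
  by_cases hsome : ∃ l ∈ c, l.1 ≠ Sum.inr v ∧ satLit σ l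
  · obtain ⟨l, hl, hne, hsl⟩ := hsome
    exact ⟨l, hl, by simpa [satLit, Function.update_of_ne hne] using hsl⟩
  · push_neg at hsome
    have hfals : ∀ l ∈ c, l.1 ≠ Sum.inr v → ¬ satLit σ l := fun l hl hne hs =>
      hsome l hl hne hs
    have hAnt : Ant C v D b' σ := ⟨c, ⟨hcC, ⟨b', hb'⟩, hD⟩, hb', hfals⟩
    refine ⟨(Sum.inr v, b'), hb', ?_⟩
    have hbb : b = b' := by
      cases b' with
      | true => exact hb.mpr hAnt
      | false =>
        by_contra h
        have hbt : b = true := by cases b <;> simp_all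
        exact hunc σ hsat hχ ⟨hb.mp hbt, hAnt⟩
    simp [satLit, hbb]
end
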